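/- arXiv:1907.06105 — 6 statements merged into one kernel-verified Lean document; each statement's English description precedes it below -/
import Mathlib

section
/- Let X ⊂ ℝ² satisfy |x−y| ≥ 1 for all distinct x, y ∈ X, and let x ∈ X. Then the number of points y ∈ X \ {x} with |x−y| ≤ √2 is at most 8. -/
/-!
Identify the plane with `ℂ` and put `x` at the origin. For two neighbours `u, v` the law of
cosines, `‖u - v‖² = ‖u‖² + ‖v‖² - 2⟪u, v⟫ ≥ 1` with `‖u‖, ‖v‖ ∈ [1, √2]`, gives
`cos ∠(u, v) ≤ 3/4`, so the arguments of any two neighbours are at least `arccos (3/4)` apart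
around the circle. Sorting the arguments, `n` neighbours need `n · arccos (3/4) ≤ 2π`, and
`arccos (3/4) > 2π/9` rules out `n = 9`.
-/

open Real Finset
open scoped InnerProductSpace

theorem Finset.exists_card_sub_one_mul_le_sub {α : Type*} [CommRing α] [LinearOrder α]
    [IsStrictOrderedRing α] {s : Finset α} (hs : s.Nonempty) {δ : α}
    (hsep : ∀ a ∈ s, ∀ b ∈ s, a < b → δ ≤ b - a) :
    ∃ a ∈ s, ∃ b ∈ s, ((#s : α) - 1) * δ ≤ b - a := by
  induction s using Finset.induction_on_max with
  | empty => exact absurd hs not_nonempty_empty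
  | insert c s hlt ih =>
    rcases s.eq_empty_or_nonempty with rfl | hne
    · exact ⟨c, mem_insert_self c _, c, mem_insert_self c _, by simp⟩
    obtain ⟨a, ha, b, hb, hab⟩ := ih hne fun x hx y hy hxy =>
      hsep x (mem_insert_of_mem hx) y (mem_insert_of_mem hy) hxy
    have hbc : δ ≤ c - b := hsep b (mem_insert_of_mem hb) c (mem_insert_self c s) (hlt b hb)
    refine ⟨a, mem_insert_of_mem ha, c, mem_insert_self c s, ?_⟩
    rw [card_insert_of_notMem fun hc => (hlt c hc).false]
    push_cast
    linarith

theorem Real.le_and_le_two_pi_sub_of_cos_le {θ t : ℝ} (hθ₀ : 0 ≤ θ) (hθπ : θ ≤ π)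
    (ht₀ : 0 ≤ t) (ht : t ≤ 2 * π) (hcos : cos t ≤ cos θ) : θ ≤ t ∧ t ≤ 2 * π - θ := by
  have key : ∀ u, 0 ≤ u → u ≤ π → cos u ≤ cos θ → θ ≤ u := fun u hu₀ huπ hu =>
    (strictAntiOn_cos.le_iff_ge ⟨hu₀, huπ⟩ ⟨hθ₀, hθπ⟩).mp hu
  rcases le_total t π with htπ | hπt
  · exact ⟨key t ht₀ htπ hcos, by linarith⟩
  · have := key (2 * π - t) (by linarith) (by linarith) (by rwa [cos_two_pi_sub])
    exact ⟨by linarith, by linarith⟩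

theorem Real.card_mul_le_two_pi {s : Finset ℝ} (hs : ∀ a ∈ s, a ∈ Set.Ioc (-π) π) {θ : ℝ}
    (hθ₀ : 0 ≤ θ) (hθπ : θ ≤ π)
    (hcos : ∀ a ∈ s, ∀ b ∈ s, a ≠ b → cos (a - b) ≤ cos θ) : #s * θ ≤ 2 * π := by
  have gap : ∀ a ∈ s, ∀ b ∈ s, a < b → θ ≤ b - a ∧ b - a ≤ 2 * π - θ := by
    intro a ha b hb hab
    obtain ⟨ha₁, ha₂⟩ := hs a ha
    obtain ⟨hb₁, hb₂⟩ := hs b hb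
    exact le_and_le_two_pi_sub_of_cos_le hθ₀ hθπ (by linarith) (by linarith)
      (hcos b hb a ha hab.ne')
  rcases s.eq_empty_or_nonempty with rfl | hne
  · simp [pi_pos.le]
  obtain ⟨a, ha, b, hb, hab⟩ := exists_card_sub_one_mul_le_sub hne fun a ha b hb h =>
    (gap a ha b hb h).1
  rcases lt_or_ge a b with hlt | hge
  · linarith [(gap a ha b hb hlt).2]
  · linarith [pi_pos]

theorem Real.two_pi_div_nine_lt_arccos : 2 * π / 9 < arccos (3 / 4) := by
  set c := cos (2 * π / 9)
  have htriple : 4 * c ^ 3 - 3 * c = -(1 / 2) := by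
    rw [← cos_three_mul, show 3 * (2 * π / 9) = π - π / 3 by ring, cos_pi_sub, cos_pi_div_three]
  have hhalf : 1 / 2 < c := by
    rw [← cos_pi_div_three]
    exact cos_lt_cos_of_nonneg_of_le_pi (by positivity) (by linarith [pi_pos])
      (by linarith [pi_pos])
  have h34 : 3 / 4 < c := by
    by_contra! hle
    -- `4c³ - 3c + 9/16 = (c - 3/4)(4c² + 3c - 3/4)`
    have : 0 ≤ (3 / 4 - c) * (4 * c ^ 2 + 3 * c - 3 / 4) :=
      mul_nonneg (by linarith) (by nlinarith)
    nlinarith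
  calc 2 * π / 9 = arccos c := (arccos_cos (by positivity) (by linarith [pi_pos])).symm
    _ < arccos (3 / 4) := arccos_lt_arccos (by norm_num) h34 (cos_le_one _)

theorem sq_add_sq_sub_one_le_of_mem_Icc {r s : ℝ} (hr : r ∈ Set.Icc 1 √2)
    (hs : s ∈ Set.Icc 1 √2) : r ^ 2 + s ^ 2 - 1 ≤ 3 / 2 * (r * s) := by
  obtain ⟨hr₁, hr₂⟩ := hr
  obtain ⟨hs₁, hs₂⟩ := hs
  have hr2 : r ^ 2 ≤ 2 := (le_sqrt' (by linarith)).mp hr₂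
  have hs2 : s ^ 2 ≤ 2 := (le_sqrt' (by linarith)).mp hs₂
  nlinarith [mul_nonneg (sub_nonneg.2 hr2) (sub_nonneg.2 hs2),
    mul_nonneg (sub_nonneg.2 hr₁) (sub_nonneg.2 hs₁), sq_nonneg (r - s)]

theorem real_inner_le_three_quarters_mul_norm_mul_norm {E : Type*} [NormedAddCommGroup E]
    [InnerProductSpace ℝ E] {u v : E} (hu : ‖u‖ ∈ Set.Icc 1 √2) (hv : ‖v‖ ∈ Set.Icc 1 √2)
    (huv : 1 ≤ ‖u - v‖) : ⟪u, v⟫_ℝ ≤ 3 / 4 * (‖u‖ * ‖v‖) := by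
  have h := norm_sub_sq_real u v
  have := sq_add_sq_sub_one_le_of_mem_Icc hu hv
  nlinarith

theorem Complex.cos_arg_sub_arg {z w : ℂ} (hz : z ≠ 0) (hw : w ≠ 0) :
    Real.cos (z.arg - w.arg) = ⟪z, w⟫_ℝ / (‖z‖ * ‖w‖) := by
  rw [Real.cos_sub, Complex.cos_arg hz, Complex.sin_arg, Complex.cos_arg hw, Complex.sin_arg,
    Complex.inner]
  simp only [Complex.mul_re, Complex.conj_re, Complex.conj_im]
  field_simp
  ring

theorem Complex.card_le_eight_of_norm_mem_Icc {F : Finset ℂ}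
    (hnorm : ∀ z ∈ F, ‖z‖ ∈ Set.Icc 1 √2) (hsep : ∀ z ∈ F, ∀ w ∈ F, z ≠ w → 1 ≤ ‖z - w‖) :
    #F ≤ 8 := by
  have hne : ∀ z ∈ F, z ≠ 0 := fun z hz h0 => by
    have := (hnorm z hz).1
    norm_num [h0] at this
  have hcos : ∀ z ∈ F, ∀ w ∈ F, z ≠ w →
      Real.cos (z.arg - w.arg) ≤ Real.cos (arccos (3 / 4)) := by
    intro z hz w hw hzw
    rw [cos_arccos (by norm_num) (by norm_num), Complex.cos_arg_sub_arg (hne z hz) (hne w hw),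
      div_le_iff₀ (mul_pos (norm_pos_iff.2 (hne z hz)) (norm_pos_iff.2 (hne w hw)))]
    exact real_inner_le_three_quarters_mul_norm_mul_norm (hnorm z hz) (hnorm w hw)
      (hsep z hz w hw hzw)
  have hinj : Set.InjOn Complex.arg F := by
    intro z hz w hw h
    by_contra hzw
    have := hcos z hz w hw hzw
    rw [h, sub_self, Real.cos_zero, cos_arccos (by norm_num) (by norm_num)] at this
    norm_num at this
  have hcard := card_mul_le_two_pi (s := F.image Complex.arg)
    (by simp [Complex.arg_le_pi, Complex.neg_pi_lt_arg]) (arccos_nonneg _) (arccos_le_pi _) (by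
      simp only [forall_mem_image]
      exact fun z hz w hw h => hcos z hz w hw fun hzw => h (congrArg Complex.arg hzw))
  rw [card_image_of_injOn hinj] at hcard
  by_contra! h9
  have : (9 : ℝ) ≤ #F := by exact_mod_cast h9
  nlinarith [two_pi_div_nine_lt_arccos, pi_pos]

theorem Set.encard_le_of_forall_finset_card_le {α : Type*} {s : Set α} {n : ℕ}
    (h : ∀ t : Finset α, ↑t ⊆ s → #t ≤ n) : s.encard ≤ n := by
  by_contra! hlt
  obtain ⟨t, hts, ht⟩ := Set.exists_subset_encard_eq (Order.add_one_le_of_lt hlt)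
  have htfin : t.Finite := Set.finite_of_encard_eq_coe ht
  have := h htfin.toFinset (by simpa using hts)
  rw [htfin.encard_eq_coe_toFinset_card] at ht
  norm_cast at ht
  omega

/-- If all pairwise distances in X ⊆ ℝ² are at least 1, then any point x ∈ X has at most 8
other points of X within distance √2. -/
theorem at_most_eight_neighbors (X : Set (EuclideanSpace ℝ (Fin 2)))
    (hX : ∀ x ∈ X, ∀ y ∈ X, x ≠ y → 1 ≤ dist x y)
    (x : EuclideanSpace ℝ (Fin 2)) (hx : x ∈ X) :
    {y ∈ X | y ≠ x ∧ dist x y ≤ Real.sqrt 2}.Finite ∧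
      {y ∈ X | y ≠ x ∧ dist x y ≤ Real.sqrt 2}.ncard ≤ 8 := by
  rw [← Set.encard_le_coe_iff_finite_ncard_le]
  refine Set.encard_le_of_forall_finset_card_le fun G hG => ?_
  let e := Complex.orthonormalBasisOneI.repr.symm
  have hdist : ∀ y z, ‖e (y - x) - e (z - x)‖ = dist y z := fun y z => by
    rw [← map_sub, LinearIsometryEquiv.norm_map, sub_sub_sub_cancel_right, dist_eq_norm]
  have hnorm : ∀ y, ‖e (y - x)‖ = dist x y := fun y => by
    rw [LinearIsometryEquiv.norm_map, dist_comm, dist_eq_norm]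
  have hinj : Function.Injective fun y => e (y - x) := fun y z h => by
    simpa using e.injective h
  rw [← card_image_of_injective G hinj]
  refine Complex.card_le_eight_of_norm_mem_Icc ?_ ?_
  · simp only [forall_mem_image, hnorm]
    intro y hy
    obtain ⟨hyX, hyx, hxy⟩ := hG hy
    exact ⟨hX x hx y hyX hyx.symm, hxy⟩
  · simp only [forall_mem_image, hdist]
    intro y hy z hz hyz
    exact hX y (hG hy).1 z (hG hz).1 (ne_of_apply_ne (fun y => e (y - x)) hyz)
end

section
/- For the sticky-disk-type potential V with V(r)=+∞ for r<1, V(r)=−1 for r∈[1,√2], V(r)=0 for r>√2, the minimal energy over N-point subsets of ℤ² satisfies E^{ℤ²}[V](N) ≤ −4N + C√N for some constant C > 0 and all N ≥ 1. -/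
/-- The sticky-disk-type potential: +∞ for r < 1, −1 for r ∈ [1,√2], 0 for r > √2. -/
noncomputable def stickyV (r : ℝ) : EReal :=
  if r < 1 then ⊤ else if r ≤ Real.sqrt 2 then (-1 : EReal) else 0

/-- The embedding of ℤ² into the Euclidean plane. -/
noncomputable def latticePt (z : ℤ × ℤ) : EuclideanSpace ℝ (Fin 2) :=
  (WithLp.equiv 2 (Fin 2 → ℝ)).symm ![(z.1 : ℝ), (z.2 : ℝ)]

/-!
Fill an `(a + 2) × (a + 2)` square of `ℤ²`, `a = ⌊√N⌋`, with `N` points. Distinct lattice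
points are at distance at least `1`, so every pair contributes `≤ 0`, and a point whose whole
`3 × 3` block is occupied has eight neighbours at distance `1` or `√2`, contributing `-8` to the
double sum. The full square has `a²` such points, and each of the `(a + 2)² - N = O(√N)`
unfilled sites spoils at most the nine blocks containing it; hence the energy is at most
`-4 (N - O(√N))`.
-/

open Finset

lemma dist_latticePt_sq (p q : ℤ × ℤ) :
    dist (latticePt p) (latticePt q) ^ 2 = (((p.1 - q.1) ^ 2 + (p.2 - q.2) ^ 2 : ℤ) : ℝ) := by
  rw [EuclideanSpace.dist_eq, Real.sq_sqrt (by positivity), Fin.sum_univ_two]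
  simp [latticePt, Real.dist_eq, sq_abs]

lemma one_le_dist_latticePt {p q : ℤ × ℤ} (hpq : p ≠ q) :
    1 ≤ dist (latticePt p) (latticePt q) := by
  have hsq : 1 ≤ (p.1 - q.1) ^ 2 + (p.2 - q.2) ^ 2 := by
    contrapose! hpq
    have h1 : p.1 - q.1 = 0 := by nlinarith [sq_nonneg (p.1 - q.1), sq_nonneg (p.2 - q.2)]
    have h2 : p.2 - q.2 = 0 := by nlinarith [sq_nonneg (p.1 - q.1), sq_nonneg (p.2 - q.2)]
    exact Prod.ext (by omega) (by omega)
  have : (1 : ℝ) ≤ dist (latticePt p) (latticePt q) ^ 2 := by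
    rw [dist_latticePt_sq]; exact_mod_cast hsq
  exact one_le_sq_iff_one_le_abs _ |>.mp this |>.trans_eq (abs_of_nonneg dist_nonneg)

lemma dist_latticePt_le_sqrt_two {p q : ℤ × ℤ} (hq : q ∈ Icc (p - 1) (p + 1)) :
    dist (latticePt p) (latticePt q) ≤ √2 := by
  simp only [mem_Icc, Prod.le_def, Prod.fst_sub, Prod.snd_sub, Prod.fst_add, Prod.snd_add,
    Prod.fst_one, Prod.snd_one] at hq
  have hsq : (p.1 - q.1) ^ 2 + (p.2 - q.2) ^ 2 ≤ 2 := by nlinarith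
  rw [Real.le_sqrt dist_nonneg (by norm_num), dist_latticePt_sq]
  exact_mod_cast hsq

lemma stickyV_dist_latticePt_nonpos {p q : ℤ × ℤ} (hpq : p ≠ q) :
    stickyV (dist (latticePt p) (latticePt q)) ≤ 0 := by
  rw [stickyV, if_neg (one_le_dist_latticePt hpq).not_gt]
  split_ifs <;> norm_num

lemma stickyV_dist_latticePt_eq_neg_one {p q : ℤ × ℤ} (hpq : p ≠ q)
    (hq : q ∈ Icc (p - 1) (p + 1)) : stickyV (dist (latticePt p) (latticePt q)) = -1 := by
  rw [stickyV, if_neg (one_le_dist_latticePt hpq).not_gt, if_pos (dist_latticePt_le_sqrt_two hq)]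

lemma card_Icc_sub_one_add_one (p : ℤ × ℤ) : #(Icc (p - 1) (p + 1)) = 9 := by
  rw [card_Icc_prod, Int.card_Icc, Int.card_Icc]
  have h3 (a : ℤ) : a + 1 + 1 - (a - 1) = 3 := by ring
  simp only [Prod.fst_sub, Prod.snd_sub, Prod.fst_add, Prod.snd_add, Prod.fst_one, Prod.snd_one,
    h3]
  rfl

/-- In the product order on `ℤ × ℤ`, `Icc (p - 1) (p + 1)` is the `3 × 3` block around `p`. -/
noncomputable def kingInterior (X : Finset (ℤ × ℤ)) : Finset (ℤ × ℤ) :=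
  X.filter fun p => Icc (p - 1) (p + 1) ⊆ X

lemma sum_stickyV_le_neg_eight {X : Finset (ℤ × ℤ)} {p : ℤ × ℤ}
    (hp : Icc (p - 1) (p + 1) ⊆ X) :
    ∑ q ∈ X.erase p, stickyV (dist (latticePt p) (latticePt q)) ≤ -8 := by
  have hsub : (Icc (p - 1) (p + 1)).erase p ⊆ X.erase p := erase_subset_erase p hp
  rw [← sum_sdiff hsub]
  have hnbrs : ∑ q ∈ (Icc (p - 1) (p + 1)).erase p,
      stickyV (dist (latticePt p) (latticePt q)) = -8 := by
    rw [sum_congr rfl fun q hq => stickyV_dist_latticePt_eq_neg_one (ne_of_mem_erase hq).symm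
      (mem_of_mem_erase hq), sum_const, card_erase_of_mem, card_Icc_sub_one_add_one]
    · norm_num
    · simp
  have hrest : ∑ q ∈ X.erase p \ (Icc (p - 1) (p + 1)).erase p,
      stickyV (dist (latticePt p) (latticePt q)) ≤ 0 :=
    sum_nonpos fun q hq =>
      stickyV_dist_latticePt_nonpos (ne_of_mem_erase (mem_sdiff.mp hq).1).symm
  rw [hnbrs]
  exact add_le_of_nonpos_left hrest

lemma sum_sum_stickyV_le (X : Finset (ℤ × ℤ)) :
    ∑ p ∈ X, ∑ q ∈ X.erase p, stickyV (dist (latticePt p) (latticePt q)) ≤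
      ((-8 * #(kingInterior X) : ℝ) : EReal) := by
  calc _ ≤ ∑ p ∈ X, if Icc (p - 1) (p + 1) ⊆ X then (-8 : EReal) else 0 := by
        refine sum_le_sum fun p _ => ?_
        split_ifs with hp
        · exact sum_stickyV_le_neg_eight hp
        · exact sum_nonpos fun q hq => stickyV_dist_latticePt_nonpos (ne_of_mem_erase hq).symm
    _ = _ := by
        rw [sum_ite, sum_const, sum_const_zero, add_zero, mul_comm, ← nsmul_eq_mul,
          EReal.coe_nsmul]
        rfl

lemma mem_Icc_sub_add_comm {α : Type*} [AddCommGroup α] [PartialOrder α] [IsOrderedAddMonoid α]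
    [LocallyFiniteOrder α] (a p q : α) :
    q ∈ Icc (p - a) (p + a) ↔ p ∈ Icc (q - a) (q + a) := by
  simp only [mem_Icc]
  constructor <;> exact fun ⟨h1, h2⟩ => ⟨sub_le_iff_le_add.mpr h2, sub_le_iff_le_add.mp h1⟩

lemma card_kingInterior_le (X Y : Finset (ℤ × ℤ)) :
    #(kingInterior X) ≤ #(kingInterior Y) + 9 * #(X \ Y) := by
  have hcover : kingInterior X ⊆
      kingInterior Y ∪ (X \ Y).biUnion fun r => Icc (r - 1) (r + 1) := by
    intro p hp
    have hpX := (mem_filter.mp hp).2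
    by_cases hpY : Icc (p - 1) (p + 1) ⊆ Y
    · exact mem_union_left _ (mem_filter.mpr ⟨hpY (by simp), hpY⟩)
    · obtain ⟨q, hq, hqY⟩ := not_subset.mp hpY
      exact mem_union_right _ (mem_biUnion.mpr
        ⟨q, mem_sdiff.mpr ⟨hpX hq, hqY⟩, (mem_Icc_sub_add_comm 1 p q).mp hq⟩)
  calc #(kingInterior X)
      ≤ #(kingInterior Y) + #((X \ Y).biUnion fun r => Icc (r - 1) (r + 1)) :=
        (card_le_card hcover).trans (card_union_le _ _)
    _ ≤ #(kingInterior Y) + 9 * #(X \ Y) := by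
        gcongr
        refine card_biUnion_le.trans ?_
        simp only [card_Icc_sub_one_add_one, sum_const, smul_eq_mul, mul_comm, le_refl]

lemma Icc_add_one_sub_one_subset_kingInterior (a b : ℤ × ℤ) :
    Icc (a + 1) (b - 1) ⊆ kingInterior (Icc a b) := by
  intro p hp
  obtain ⟨hap, hpb⟩ := mem_Icc.mp hp
  have hIcc : Icc (p - 1) (p + 1) ⊆ Icc a b :=
    Icc_subset_Icc (le_sub_iff_add_le.mpr hap) (le_sub_iff_add_le.mp hpb)
  exact mem_filter.mpr ⟨hIcc (by simp), hIcc⟩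

lemma exists_card_eq_le_card_kingInterior (N : ℕ) :
    ∃ X : Finset (ℤ × ℤ), #X = N ∧
      (N : ℝ) - 36 * (N.sqrt + 1) ≤ #(kingInterior X) := by
  set a := N.sqrt
  set R : Finset (ℤ × ℤ) := Icc 0 ((a : ℤ × ℤ) + 1)
  have hcardR : #R = (a + 2) ^ 2 := by
    rw [card_Icc_prod, Int.card_Icc, Int.card_Icc]
    simp only [Prod.fst_zero, Prod.snd_zero, Prod.fst_add, Prod.snd_add, Prod.fst_natCast,
      Prod.snd_natCast, Prod.fst_one, Prod.snd_one, sub_zero]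
    norm_cast
    ring
  have hinnerR : a ^ 2 ≤ #(kingInterior R) := by
    refine le_of_eq_of_le ?_ (card_le_card (Icc_add_one_sub_one_subset_kingInterior _ _))
    rw [card_Icc_prod, Int.card_Icc, Int.card_Icc]
    simp only [add_sub_cancel_right, Prod.fst_natCast, zero_add, Prod.fst_one, Int.toNat_natCast,
      Prod.snd_natCast, Prod.snd_one]
    ring
  have hNR : N ≤ #R := hcardR ▸ (Nat.lt_succ_sqrt' N).le.trans (by gcongr; omega)
  obtain ⟨X, hXR, hX⟩ := exists_subset_card_eq hNR
  refine ⟨X, hX, ?_⟩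
  have hremove := card_kingInterior_le R X
  have hsdiff := card_sdiff_add_card_eq_card hXR
  have ha : a ^ 2 ≤ N := Nat.sqrt_le' N
  rw [hX, hcardR] at hsdiff
  have : (a : ℝ) ^ 2 ≤ #(kingInterior X) + 9 * #(R \ X) := by
    exact_mod_cast hinnerR.trans hremove
  have : (#(R \ X) : ℝ) + N = (a + 2) ^ 2 := by exact_mod_cast hsdiff
  have : (a : ℝ) ^ 2 ≤ N := by exact_mod_cast ha
  linarith

/-- There is a constant C > 0 such that for every N ≥ 1 there is an N-point subset of ℤ²
whose sticky-disk energy is at most −4N + C√N; i.e. E^{ℤ²}[V](N) ≤ −4N + C√N. -/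
theorem lattice_energy_upper_bound :
    ∃ C : ℝ, 0 < C ∧ ∀ N : ℕ, 1 ≤ N → ∃ X : Finset (ℤ × ℤ), X.card = N ∧
      ((1 / 2 : ℝ) : EReal) *
          ∑ p ∈ X, ∑ q ∈ X.erase p, stickyV (dist (latticePt p) (latticePt q)) ≤
        ((-4 * (N : ℝ) + C * Real.sqrt N : ℝ) : EReal) := by
  refine ⟨288, by norm_num, fun N hN => ?_⟩
  obtain ⟨X, hX, hinterior⟩ := exists_card_eq_le_card_kingInterior N
  refine ⟨X, hX, ?_⟩
  have hsqrt : (N.sqrt : ℝ) + 1 ≤ 2 * √N := by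
    have : (1 : ℝ) ≤ √N := Real.one_le_sqrt.mpr (by exact_mod_cast hN)
    linarith [Real.nat_sqrt_le_real_sqrt (a := N)]
  calc ((1 / 2 : ℝ) : EReal) *
        ∑ p ∈ X, ∑ q ∈ X.erase p, stickyV (dist (latticePt p) (latticePt q))
      ≤ ((1 / 2 : ℝ) : EReal) * ((-8 * #(kingInterior X) : ℝ) : EReal) :=
        mul_le_mul_of_nonneg_left (sum_sum_stickyV_le X) (by norm_num)
    _ = ((-4 * #(kingInterior X) : ℝ) : EReal) := by rw [← EReal.coe_mul]; ring_nf
    _ ≤ _ := EReal.coe_le_coe_iff.mpr (by linarith)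
end

section
/- There exists ᾱ > 0 (one may take ᾱ ≈ 0.068, the smaller root of 2cos(40°)α² − (2√2+2+4cos40°)α + 2cos40° − 1 = 0) such that for all α ∈ [0, ᾱ): if X ⊂ ℝ² satisfies |x−y| > 1−α for all distinct x,y ∈ X, then every point x ∈ X has at most 8 other points of X within distance √2 + α. -/
/-!
Place `x` at the origin of `ℂ`. Its neighbours have modulus in `(1 - α, √2 + α]` and are pairwise
more than `1 - α` apart. By the law of cosines, two such points `z, w` satisfy
`cos (arg z - arg w) < 151/200 < cos 40°` once `α < 1/200`. But among nine angles two differ by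
at most `2π/9 = 40°` modulo `2π`, by pigeonhole on nine arcs of length `2π/9`.
-/

open Real Set

theorem exists_ne_abs_sub_le_of_mem_Icc {ι : Type*} [Fintype ι] {n : ℕ} (hn : 0 < n)
    (hcard : n < Fintype.card ι) {a δ : ℝ} (hδ : 0 < δ) {f : ι → ℝ}
    (hf : ∀ i, f i ∈ Icc a (a + n * δ)) : ∃ i j, i ≠ j ∧ |f i - f j| ≤ δ := by
  let box : ι → Fin n := fun i => ⟨min ⌊(f i - a) / δ⌋₊ (n - 1), by omega⟩
  have hbox : ∀ i, a + (box i : ℕ) * δ ≤ f i ∧ f i ≤ a + ((box i : ℕ) + 1) * δ := by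
    intro i
    obtain ⟨hlo, hhi⟩ := hf i
    have hq : 0 ≤ (f i - a) / δ := div_nonneg (by linarith) hδ.le
    simp only [box]
    rcases min_cases ⌊(f i - a) / δ⌋₊ (n - 1) with ⟨h, -⟩ | ⟨h, hlt⟩ <;> rw [h]
    · have h₁ := Nat.floor_le hq
      have h₂ := Nat.lt_floor_add_one ((f i - a) / δ)
      rw [le_div_iff₀ hδ] at h₁
      rw [div_lt_iff₀ hδ] at h₂
      constructor <;> linarith
    · have h₁ : ((n - 1 : ℕ) : ℝ) ≤ (f i - a) / δ :=
        (Nat.cast_le.2 hlt.le).trans (Nat.floor_le hq)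
      rw [le_div_iff₀ hδ] at h₁
      have h₂ : ((n - 1 : ℕ) : ℝ) + 1 = n := by
        rw [Nat.cast_sub (by omega)]; push_cast; ring
      rw [h₂]
      constructor <;> linarith
  obtain ⟨i, j, hij, hbij⟩ := Fintype.exists_ne_map_eq_of_card_lt box (by simpa using hcard)
  have hi := hbox i
  have hj := hbox j
  rw [hbij] at hi
  exact ⟨i, j, hij, abs_le.2 ⟨by linarith, by linarith⟩⟩

theorem exists_ne_cos_two_pi_div_card_le_cos_sub {ι : Type*} [Fintype ι]
    (hι : 2 ≤ Fintype.card ι) (φ : ι → ℝ) :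
    ∃ i j, i ≠ j ∧ cos (2 * π / Fintype.card ι) ≤ cos (φ i - φ j) := by
  set n := Fintype.card ι
  obtain ⟨i₀⟩ : Nonempty ι := Fintype.card_pos_iff.1 (by omega)
  set δ := 2 * π / n
  have hnδ : n * δ = 2 * π := by simp only [δ]; field_simp
  have hδπ : δ ≤ π := by
    rw [div_le_iff₀ (by positivity)]
    have := mul_le_mul_of_nonneg_left (by exact_mod_cast hι : (2 : ℝ) ≤ n) pi_pos.le
    linarith
  have hcos_le : ∀ x, |x| ≤ δ → cos δ ≤ cos x := fun x hx => by
    rw [← cos_abs x]; exact cos_le_cos_of_nonneg_of_le_pi (abs_nonneg x) hδπ hx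
  let θ : ι → ℝ := fun i => toIcoMod two_pi_pos (φ i₀) (φ i)
  have hθ₀ : θ i₀ = φ i₀ := toIcoMod_apply_left _ _
  have hcos : ∀ i j, cos (θ i - θ j) = cos (φ i - φ j) := fun i j => by
    simp only [θ, ← Real.Angle.cos_coe, Real.Angle.coe_sub, Real.Angle.coe_toIcoMod]
  -- `φ i₀ + 2π` is `θ i₀` seen once around the circle
  have hwrap : ∀ j, |θ j - (φ i₀ + 2 * π)| ≤ δ → ∃ i j, i ≠ j ∧ cos δ ≤ cos (φ i - φ j) := by
    intro j hj
    refine ⟨j, i₀, fun h => ?_, ?_⟩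
    · rw [h, hθ₀, abs_sub_comm] at hj
      simp only [add_sub_cancel_left, abs_of_pos two_pi_pos] at hj
      linarith [pi_pos]
    · rw [← hcos, hθ₀, ← cos_sub_two_pi (θ j - φ i₀), sub_sub]
      exact hcos_le _ hj
  obtain ⟨o, o', hne, hle⟩ := exists_ne_abs_sub_le_of_mem_Icc (n := n) (by omega)
    (by simp [n]) (δ := δ) (by positivity) (f := fun o : Option ι => o.elim (φ i₀ + 2 * π) θ)
    (a := φ i₀) (by
      rintro (_ | i)
      · simp [hnδ, pi_pos.le]
      · simpa only [Option.elim_some, hnδ] using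
          Ico_subset_Icc_self (toIcoMod_mem_Ico two_pi_pos (φ i₀) (φ i)))
  rcases o with _ | i <;> rcases o' with _ | j
  · exact absurd rfl hne
  · exact hwrap j (by rwa [abs_sub_comm] at hle)
  · exact hwrap i hle
  · exact ⟨i, j, fun h => hne (h ▸ rfl), hcos i j ▸ hcos_le _ hle⟩

theorem cos_two_pi_div_nine_gt : (151 / 200 : ℝ) < cos (2 * π / 9) := by
  have := one_sub_sq_div_two_le_cos (x := 2 * π / 9)
  nlinarith [pi_lt_d2, pi_pos]

theorem cos_angle_eq_cos_arg_sub {z w : ℂ} (hz : z ≠ 0) (hw : w ≠ 0) :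
    cos (InnerProductGeometry.angle z w) = cos (z.arg - w.arg) := by
  rw [Complex.angle_eq_abs_arg hz hw, cos_abs, ← Real.Angle.cos_coe,
    Complex.arg_div_coe_angle hz hw, ← Real.Angle.coe_sub, Real.Angle.cos_coe]

theorem sq_add_sq_sub_sq_le_mul {α a b : ℝ} (hα : α < 1 / 200)
    (ha : a ∈ Ioc (1 - α) (√2 + α)) (hb : b ∈ Ioc (1 - α) (√2 + α)) :
    a ^ 2 + b ^ 2 - (1 - α) ^ 2 ≤ 151 / 100 * a * b := by
  obtain ⟨ha₁, ha₂⟩ := ha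
  obtain ⟨hb₁, hb₂⟩ := hb
  have hsqrt2 : √2 < 1.41422 := by
    rw [sqrt_lt' (by norm_num)]; norm_num
  -- the difference of the two sides is convex in `a` and in `b`, so only the corners matter;
  -- the tight one is `a = b = √2 + α`
  nlinarith [mul_nonneg (sub_nonneg.2 ha₂) (sub_nonneg.2 hb₂),
    mul_nonneg (sub_nonneg.2 ha₁.le) (sub_nonneg.2 hb₁.le),
    mul_nonneg (sub_nonneg.2 ha₁.le) (sub_nonneg.2 hb₂),
    mul_nonneg (sub_nonneg.2 ha₂) (sub_nonneg.2 hb₁.le),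
    mul_nonneg (sub_nonneg.2 ha₁.le) (sub_nonneg.2 ha₂),
    mul_nonneg (sub_nonneg.2 hb₁.le) (sub_nonneg.2 hb₂), sqrt_nonneg 2,
    sq_sqrt (zero_le_two (α := ℝ))]

theorem cos_arg_sub_lt_of_mem_annulus {α : ℝ} (hα : α < 1 / 200) {z w : ℂ}
    (hz : ‖z‖ ∈ Ioc (1 - α) (√2 + α)) (hw : ‖w‖ ∈ Ioc (1 - α) (√2 + α))
    (hzw : 1 - α < ‖z - w‖) : cos (z.arg - w.arg) < 151 / 200 := by
  have hz₀ : 0 < ‖z‖ := by linarith [hz.1]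
  have hw₀ : 0 < ‖w‖ := by linarith [hw.1]
  have hlaw :=
    InnerProductGeometry.norm_sub_sq_eq_norm_sq_add_norm_sq_sub_two_mul_norm_mul_norm_mul_cos_angle z w
  rw [cos_angle_eq_cos_arg_sub (norm_pos_iff.1 hz₀) (norm_pos_iff.1 hw₀)] at hlaw
  have hsq : (1 - α) ^ 2 < ‖z - w‖ ^ 2 := pow_lt_pow_left₀ hzw (by linarith) two_ne_zero
  nlinarith [sq_add_sq_sub_sq_le_mul hα hz hw, mul_pos hz₀ hw₀]

theorem encard_le_eight_of_mem_annulus {α : ℝ} (hα : α < 1 / 200) {S : Set ℂ}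
    (hS : ∀ z ∈ S, ‖z‖ ∈ Ioc (1 - α) (√2 + α))
    (hsep : S.Pairwise fun z w => 1 - α < ‖z - w‖) : S.encard ≤ 8 := by
  by_contra! h
  obtain ⟨t, hts, ht⟩ := exists_subset_encard_eq (Order.add_one_le_of_lt h)
  have : Fintype t := (finite_of_encard_eq_coe ht).fintype
  have hcard : Fintype.card t = 9 := by
    rw [← Nat.card_eq_fintype_card, Nat.card_coe_set_eq, ncard_def, ht]; rfl
  obtain ⟨⟨z, hz⟩, ⟨w, hw⟩, hne, hcos⟩ :=
    exists_ne_cos_two_pi_div_card_le_cos_sub (by omega) fun z : t => z.1.arg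
  rw [hcard] at hcos
  have := cos_arg_sub_lt_of_mem_annulus hα (hS z (hts hz)) (hS w (hts hw))
    (hsep (hts hz) (hts hw) fun h => hne (Subtype.ext h))
  linarith [cos_two_pi_div_nine_gt]

/-- There exists ᾱ > 0 such that for all α ∈ [0, ᾱ): if X ⊆ ℝ² satisfies
|x−y| > 1−α for all distinct x, y ∈ X, then every x ∈ X has at most 8 other points
of X within distance √2 + α. -/
theorem at_most_eight_neighbors_perturbed :
    ∃ abar : ℝ, 0 < abar ∧ ∀ α : ℝ, 0 ≤ α → α < abar →
      ∀ X : Set (EuclideanSpace ℝ (Fin 2)),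
        (∀ x ∈ X, ∀ y ∈ X, x ≠ y → 1 - α < dist x y) →
        ∀ x ∈ X,
          {y ∈ X | y ≠ x ∧ dist x y ≤ Real.sqrt 2 + α}.Finite ∧
            {y ∈ X | y ≠ x ∧ dist x y ≤ Real.sqrt 2 + α}.ncard ≤ 8 := by
  refine ⟨1 / 200, by norm_num, fun α _ hα X hX x hx => ?_⟩
  let f : EuclideanSpace ℝ (Fin 2) → ℂ := fun y => Complex.orthonormalBasisOneI.repr.symm (y - x)
  have hf : ∀ y z, ‖f y - f z‖ = dist y z := fun y z => by
    simp only [f, ← map_sub, LinearIsometryEquiv.norm_map, sub_sub_sub_cancel_right, dist_eq_norm]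
  have hf₀ : ∀ y, ‖f y‖ = dist x y := fun y => by
    rw [dist_comm, ← hf y x]; simp [f]
  have hinj : Function.Injective f := fun y z h => by
    simpa [h] using (hf y z).symm
  rw [← encard_le_coe_iff_finite_ncard_le, ← hinj.encard_image]
  refine encard_le_eight_of_mem_annulus hα ?_ ?_
  · rintro _ ⟨y, ⟨hy, hyx, hxy⟩, rfl⟩
    rw [hf₀]
    exact ⟨hX x hx y hy (Ne.symm hyx), hxy⟩
  · rintro _ ⟨y, ⟨hy, -⟩, rfl⟩ _ ⟨z, ⟨hz, -⟩, rfl⟩ hne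
    rw [hf]
    exact hX y hy z hz fun h => hne (h ▸ rfl)
end

section
/- Let x₁, x₂, x₃, x₄ ∈ ℝ² be four points with all six pairwise distances in the interval (1−ε, √2+ε), for ε > 0 sufficiently small. Then, up to relabeling, the points can be cyclically ordered so that |x_i − x_{i+1}| = 1 + O(ε) for the four sides, the interior angles satisfy ∠x_i x_{i+1} x_{i+2} = 90° + O(ε), and the two diagonals satisfy |x_i − x_{i+2}| = √2 + O(ε). -/
/-!
Let `p, q` be a farthest pair of the four points, at distance `D < √2 + ε`, and use coordinates
in which `p = (-D/2, 0)` and `q = (D/2, 0)`. The two remaining points `u, v` lie in the lens of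
points whose distances to `p` and `q` lie in `(1 - ε, D]`. Each half of this lens has diameter
well below `1`, so `u` and `v` lie on opposite sides of the line `pq`. Their ordinates then both
exceed `√(1 - D²/4) - O(ε)` in absolute value, and `|uv| ≤ D` gives `D² ≥ 2 - O(ε)`, so both
diagonals are `√2 + O(ε)`; the same inequality bounds the ordinates by `√2/2 + O(ε)`, the
abscissas by `O(ε)`, and hence the sides by `1 + O(ε)`. The angles follow from the law of cosines.
-/

open Real EuclideanGeometry

local notation "ℝ²" => EuclideanSpace ℝ (Fin 2)

theorem abs_sub_pi_div_two_le {θ : ℝ} (h₀ : 0 ≤ θ) (h₁ : θ ≤ π) :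
    |θ - π / 2| ≤ π / 2 * |cos θ| := by
  have h := mul_abs_le_abs_sin (x := θ - π / 2) (abs_le.2 ⟨by linarith, by linarith⟩)
  rw [sin_sub_pi_div_two, abs_neg] at h
  have := pi_pos
  calc |θ - π / 2| = π / 2 * (2 / π * |θ - π / 2|) := by field_simp
    _ ≤ π / 2 * |cos θ| := by gcongr

theorem abs_sub_le_of_abs_sq_sub_le {d a δ : ℝ} (hd : 0 ≤ d) (ha : 1 ≤ a)
    (h : |d ^ 2 - a ^ 2| ≤ δ) : |d - a| ≤ δ := by
  rw [sq_sub_sq, abs_mul, abs_of_pos (by linarith : 0 < d + a)] at h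
  nlinarith [abs_nonneg (d - a)]

theorem sq_sub_le_of_mem_Icc {x y a b : ℝ} (hx : x ∈ Set.Icc a b) (hy : y ∈ Set.Icc a b) :
    (x - y) ^ 2 ≤ (b - a) ^ 2 :=
  sq_le_sq' (by linarith [hx.1, hy.2]) (by linarith [hx.2, hy.1])

theorem abs_add_abs_le_of_mul_neg {A A' B B' D : ℝ} (hD : 0 ≤ D) (hBB : B * B' < 0)
    (h : (A - A') ^ 2 + (B - B') ^ 2 ≤ D ^ 2) : |B| + |B'| ≤ D := by
  have : (|B| + |B'|) ^ 2 ≤ D ^ 2 := by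
    rw [add_sq, sq_abs, sq_abs, mul_assoc, ← abs_mul, abs_of_neg hBB]
    nlinarith [sq_nonneg (A - A')]
  exact (pow_le_pow_iff_left₀ (by positivity) hD two_ne_zero).1 this

theorem sq_sqrt_two_add_le {ε : ℝ} (hε : 0 ≤ ε) (hε' : ε ≤ 1 / 100) :
    (√2 + ε) ^ 2 ≤ 2 + 4 * ε := by
  have hs : √2 ^ 2 = 2 := sq_sqrt (by norm_num)
  nlinarith [sqrt_two_lt_three_halves]

/-- `(A, B)` is at distance in `(r, D]` from both `(-D/2, 0)` and `(D/2, 0)`. -/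
def InLens (r D A B : ℝ) : Prop :=
  r ^ 2 < (A + D / 2) ^ 2 + B ^ 2 ∧ (A + D / 2) ^ 2 + B ^ 2 ≤ D ^ 2 ∧
    r ^ 2 < (A - D / 2) ^ 2 + B ^ 2 ∧ (A - D / 2) ^ 2 + B ^ 2 ≤ D ^ 2

namespace InLens

variable {r D A B A' B' ε : ℝ}

theorem neg (h : InLens r D A B) : InLens r D (-A) B := by
  obtain ⟨h₁, h₂, h₃, h₄⟩ := h
  refine ⟨?_, ?_, ?_, ?_⟩ <;> linarith [show (-A + D / 2) ^ 2 = (A - D / 2) ^ 2 by ring,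
    show (-A - D / 2) ^ 2 = (A + D / 2) ^ 2 by ring]

theorem abs (h : InLens r D A B) : InLens r D |A| B := by
  rcases abs_choice A with hA | hA <;> rw [hA]
  exacts [h, h.neg]

theorem abs_le_half (hD : 0 ≤ D) (h : InLens r D A B) : |A| ≤ D / 2 := by
  obtain ⟨-, h₂, -, -⟩ := h.abs
  nlinarith [abs_nonneg A, sq_nonneg B]

theorem two_mul_abs_mul_lt (h : InLens r D A B) : 2 * |A| * D < D ^ 2 - r ^ 2 := by
  obtain ⟨-, h₂, h₃, -⟩ := h.abs
  nlinarith

theorem sub_lt_sq (hD : 0 ≤ D) (h : InLens r D A B) : r ^ 2 - D ^ 2 / 4 < B ^ 2 := by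
  have hA := h.abs_le_half hD
  obtain ⟨-, -, h₃, -⟩ := h.abs
  nlinarith [abs_nonneg A]

theorem sq_le (hD : 0 ≤ D) (h : InLens r D A B) : B ^ 2 ≤ 3 / 4 * D ^ 2 := by
  obtain ⟨-, h₂, -, -⟩ := h.abs
  nlinarith [abs_nonneg A]

theorem sq_abscissa_sub_le (hD : 0 ≤ D) (hr : 0.98 ≤ r ^ 2) (hD' : D ^ 2 ≤ 2.04)
    (h : InLens r D A B) (h' : InLens r D A' B') : (A - A') ^ 2 ≤ 0.56 := by
  have hrD : r ^ 2 < D ^ 2 := h.1.trans_le h.2.1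
  have hAA : |A - A'| * D ≤ D ^ 2 - r ^ 2 := by
    have := mul_le_mul_of_nonneg_right (abs_sub A A') hD
    linarith [h.two_mul_abs_mul_lt, h'.two_mul_abs_mul_lt]
  have hsq : (|A - A'| * D) ^ 2 ≤ (D ^ 2 - r ^ 2) ^ 2 :=
    pow_le_pow_left₀ (by positivity) hAA 2
  have hquad : (D ^ 2 - r ^ 2) ^ 2 ≤ 0.56 * D ^ 2 := by
    nlinarith [mul_nonpos_of_nonneg_of_nonpos (by linarith : 0 ≤ D ^ 2 - 0.98)
      (by linarith : D ^ 2 - 2.04 ≤ 0)]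
  rw [mul_pow, sq_abs] at hsq
  exact le_of_mul_le_mul_right (hsq.trans hquad) (by linarith)

theorem abs_ordinate_mem_Icc (hD : 0 ≤ D) (hr : 0.98 ≤ r ^ 2) (hD' : D ^ 2 ≤ 2.04)
    (h : InLens r D A B) : |B| ∈ Set.Icc 0.68 1.24 := by
  have hlo := h.sub_lt_sq hD
  have hhi := h.sq_le hD
  rw [← sq_abs B] at hlo hhi
  constructor
  · exact (pow_le_pow_iff_left₀ (by norm_num) (abs_nonneg B) two_ne_zero).1 (by linarith)
  · exact (pow_le_pow_iff_left₀ (abs_nonneg B) (by norm_num) two_ne_zero).1 (by linarith)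

theorem mul_neg_of_lt (hD : 0 ≤ D) (hr : 0.98 ≤ r ^ 2) (hD' : D ^ 2 ≤ 2.04)
    (h : InLens r D A B) (h' : InLens r D A' B') (hlt : r ^ 2 < (A - A') ^ 2 + (B - B') ^ 2) :
    B * B' < 0 := by
  by_contra! hBB
  have hA := h.sq_abscissa_sub_le hD hr hD' h'
  have hB : (B - B') ^ 2 ≤ (1.24 - 0.68) ^ 2 := by
    have e : (B - B') ^ 2 = (|B| - |B'|) ^ 2 := by
      rw [sub_sq, sub_sq, sq_abs, sq_abs, mul_assoc, mul_assoc, ← abs_mul, abs_of_nonneg hBB]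
    rw [e]
    exact sq_sub_le_of_mem_Icc (h.abs_ordinate_mem_Icc hD hr hD')
      (h'.abs_ordinate_mem_Icc hD hr hD')
  norm_num at hB
  linarith

theorem four_mul_sub_le_sq_sub (hD : 0 ≤ D) (h : InLens r D A B) (h' : InLens r D A' B')
    (hBB : B * B' < 0) : 4 * r ^ 2 - D ^ 2 ≤ (B - B') ^ 2 := by
  have b₁ := h.sub_lt_sq hD
  have b₂ := h'.sub_lt_sq hD
  rcases le_or_gt (r ^ 2 - D ^ 2 / 4) 0 with hc | hc
  · nlinarith
  · have : r ^ 2 - D ^ 2 / 4 ≤ -(B * B') := by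
      nlinarith [mul_le_mul b₁.le b₂.le hc.le (sq_nonneg B)]
    nlinarith

theorem opposite_estimates (hε : 0 < ε) (hε' : ε ≤ 1 / 100) (hD : 0 ≤ D) (hD' : D ≤ √2 + ε)
    (h : InLens (1 - ε) D A B) (h' : InLens (1 - ε) D A' B')
    (hlo : (1 - ε) ^ 2 < (A - A') ^ 2 + (B - B') ^ 2) (hhi : (A - A') ^ 2 + (B - B') ^ 2 ≤ D ^ 2) :
    |B| + |B'| ≤ D ∧ 2 - 12 * ε ≤ (A - A') ^ 2 + (B - B') ^ 2 := by
  have hr : 1 - 2 * ε ≤ (1 - ε) ^ 2 := by nlinarith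
  have hDsq : D ^ 2 ≤ 2 + 4 * ε :=
    (pow_le_pow_left₀ hD hD' 2).trans (sq_sqrt_two_add_le hε.le hε')
  have hBB := h.mul_neg_of_lt hD (by linarith) (by linarith) h' hlo
  have := h.four_mul_sub_le_sq_sub hD h' hBB
  exact ⟨abs_add_abs_le_of_mul_neg hD hBB hhi, by nlinarith [sq_nonneg (A - A')]⟩

theorem sides_le (hε : 0 < ε) (hε' : ε ≤ 1 / 100) (hD : 0 ≤ D) (hD' : D ≤ √2 + ε)
    (h : InLens (1 - ε) D A B) (h' : InLens (1 - ε) D A' B') (hBB : |B| + |B'| ≤ D) :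
    (A + D / 2) ^ 2 + B ^ 2 ≤ 1 + 25 * ε ∧ (A - D / 2) ^ 2 + B ^ 2 ≤ 1 + 25 * ε := by
  have hs : √2 ^ 2 = 2 := sq_sqrt (by norm_num)
  have hs₁ : 1.414 ≤ √2 := by nlinarith [sqrt_nonneg 2]
  have hs₂ : √2 ≤ 1.4143 := by nlinarith [sqrt_nonneg 2]
  have hB' : √2 / 2 - 4 * ε ≤ |B'| := by
    have hB'sq := h'.sub_lt_sq hD
    rw [← sq_abs B'] at hB'sq
    have hDsq : D ^ 2 ≤ (√2 + ε) ^ 2 := pow_le_pow_left₀ hD hD' 2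
    by_contra! hlt
    nlinarith [mul_self_lt_mul_self (abs_nonneg B') hlt]
  have hB : |B| ^ 2 ≤ 1 / 2 + 7.5 * ε := by
    have : |B| ≤ √2 / 2 + 5 * ε := by linarith
    nlinarith [abs_nonneg B]
  obtain ⟨-, -, hnear, -⟩ := h.abs
  have hA : |A| ≤ D / 2 - (√2 / 2 - 8 * ε) := by
    rw [← sq_abs B] at hnear
    nlinarith [h.abs_le_half hD]
  have hfar : (|A| + D / 2) ^ 2 + B ^ 2 ≤ 1 + 25 * ε := by
    have : |A| + D / 2 ≤ √2 / 2 + 9 * ε := by linarith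
    rw [← sq_abs B]
    nlinarith [abs_nonneg A]
  have h₁ : A * D ≤ |A| * D := mul_le_mul_of_nonneg_right (le_abs_self A) hD
  have h₂ : -A * D ≤ |A| * D := mul_le_mul_of_nonneg_right (neg_le_abs A) hD
  constructor <;> nlinarith [sq_abs A]

end InLens

section Frame

/-- Coordinates of `u` in the frame with origin at the midpoint of `pq` and first axis along
`q - p`. -/
noncomputable def abscissa (p q u : ℝ²) : ℝ :=
  ((u 0 - (p 0 + q 0) / 2) * (q 0 - p 0) + (u 1 - (p 1 + q 1) / 2) * (q 1 - p 1)) / dist p q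

noncomputable def ordinate (p q u : ℝ²) : ℝ :=
  ((q 0 - p 0) * (u 1 - (p 1 + q 1) / 2) - (q 1 - p 1) * (u 0 - (p 0 + q 0) / 2)) / dist p q

theorem EuclideanSpace.dist_sq_eq_fin_two (u v : ℝ²) :
    dist u v ^ 2 = (u 0 - v 0) ^ 2 + (u 1 - v 1) ^ 2 := by
  rw [EuclideanSpace.dist_eq, sq_sqrt (by positivity), Fin.sum_univ_two, Real.dist_eq,
    Real.dist_eq, sq_abs, sq_abs]

variable {p q : ℝ²}

theorem dist_sq_eq_abscissa_ordinate (hpq : p ≠ q) (u v : ℝ²) :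
    dist u v ^ 2 =
      (abscissa p q u - abscissa p q v) ^ 2 + (ordinate p q u - ordinate p q v) ^ 2 := by
  have hD : dist p q ≠ 0 := dist_ne_zero.2 hpq
  have hD2 := EuclideanSpace.dist_sq_eq_fin_two p q
  rw [EuclideanSpace.dist_sq_eq_fin_two, abscissa, abscissa, ordinate, ordinate]
  field_simp
  linear_combination 4 * ((u 0 - v 0) ^ 2 + (u 1 - v 1) ^ 2) * hD2

theorem abscissa_left (hpq : p ≠ q) : abscissa p q p = -(dist p q / 2) := by
  have hD : dist p q ≠ 0 := dist_ne_zero.2 hpq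
  have hD2 := EuclideanSpace.dist_sq_eq_fin_two p q
  rw [abscissa]
  field_simp
  linear_combination hD2

theorem abscissa_right (hpq : p ≠ q) : abscissa p q q = dist p q / 2 := by
  have hD : dist p q ≠ 0 := dist_ne_zero.2 hpq
  have hD2 := EuclideanSpace.dist_sq_eq_fin_two p q
  rw [abscissa]
  field_simp
  linear_combination -hD2

theorem ordinate_left : ordinate p q p = 0 := by
  rw [ordinate]
  ring

theorem ordinate_right : ordinate p q q = 0 := by
  rw [ordinate]
  ring

theorem dist_left_sq (hpq : p ≠ q) (u : ℝ²) :
    dist u p ^ 2 = (abscissa p q u + dist p q / 2) ^ 2 + ordinate p q u ^ 2 := by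
  rw [dist_sq_eq_abscissa_ordinate hpq, abscissa_left hpq, ordinate_left, sub_neg_eq_add,
    sub_zero]

theorem dist_right_sq (hpq : p ≠ q) (u : ℝ²) :
    dist u q ^ 2 = (abscissa p q u - dist p q / 2) ^ 2 + ordinate p q u ^ 2 := by
  rw [dist_sq_eq_abscissa_ordinate hpq, abscissa_right hpq, ordinate_right, sub_zero]

theorem inLens_abscissa_ordinate (hpq : p ≠ q) {r : ℝ} (hr : 0 ≤ r) {u : ℝ²}
    (hp : r < dist u p) (hp' : dist u p ≤ dist p q) (hq : r < dist u q)
    (hq' : dist u q ≤ dist p q) :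
    InLens r (dist p q) (abscissa p q u) (ordinate p q u) := by
  rw [InLens, ← dist_left_sq hpq, ← dist_right_sq hpq]
  exact ⟨pow_lt_pow_left₀ hp hr two_ne_zero, pow_le_pow_left₀ dist_nonneg hp' 2,
    pow_lt_pow_left₀ hq hr two_ne_zero, pow_le_pow_left₀ dist_nonneg hq' 2⟩

end Frame

section Angle

variable {V P : Type*} [NormedAddCommGroup V] [InnerProductSpace ℝ V] [MetricSpace P]
  [NormedAddTorsor V P]

theorem abs_angle_sub_pi_div_two_le {p q r : P} {δ : ℝ} (hδ : δ ≤ 1 / 4)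
    (hpq : |dist p q ^ 2 - 1| ≤ δ) (hqr : |dist q r ^ 2 - 1| ≤ δ) (hpr : |dist p r ^ 2 - 2| ≤ δ) :
    |∠ p q r - π / 2| ≤ 4 * δ := by
  have hcos := law_cos p q r
  rw [dist_comm r q] at hcos
  set a := dist p q
  set b := dist q r
  rw [abs_le] at hpq hqr hpr
  have hab : 3 / 4 ≤ a * b := by
    nlinarith [mul_nonneg (dist_nonneg : 0 ≤ a) (dist_nonneg : 0 ≤ b),
      mul_le_mul (by linarith : 3 / 4 ≤ a ^ 2) (by linarith : 3 / 4 ≤ b ^ 2) (by norm_num)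
        (sq_nonneg a)]
  have hc : |cos (∠ p q r)| ≤ 2 * δ := by
    rw [abs_le]
    constructor <;> nlinarith [neg_one_le_cos (∠ p q r), cos_le_one (∠ p q r)]
  calc |∠ p q r - π / 2| ≤ π / 2 * |cos (∠ p q r)| :=
        abs_sub_pi_div_two_le (angle_nonneg p q r) (angle_le_pi p q r)
    _ ≤ 4 / 2 * (2 * δ) := by gcongr; exact pi_le_four
    _ = 4 * δ := by ring

end Angle

theorem sq_dist_estimates_of_diameter {ε : ℝ} (hε : 0 < ε) (hε' : ε ≤ 1 / 100)
    {y : Fin 4 → ℝ²} (hy : ∀ i j, i ≠ j → dist (y i) (y j) ∈ Set.Ioo (1 - ε) (√2 + ε))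
    (hmax : ∀ i j, dist (y i) (y j) ≤ dist (y 0) (y 2)) (i : Fin 4) :
    |dist (y i) (y (i + 1)) ^ 2 - 1| ≤ 25 * ε ∧ |dist (y i) (y (i + 2)) ^ 2 - 2| ≤ 25 * ε := by
  have hr : 0 ≤ 1 - ε := by linarith
  have hr2 : 1 - 2 * ε ≤ (1 - ε) ^ 2 := by linarith [sq_nonneg ε, sub_sq 1 ε]
  have hlo : ∀ i j, i ≠ j → (1 - ε) ^ 2 < dist (y i) (y j) ^ 2 := fun i j hij =>
    pow_lt_pow_left₀ (hy i j hij).1 hr two_ne_zero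
  have hhi : ∀ i j, dist (y i) (y j) ^ 2 ≤ dist (y 0) (y 2) ^ 2 := fun i j =>
    pow_le_pow_left₀ dist_nonneg (hmax i j) 2
  have hpq : y 0 ≠ y 2 := dist_pos.1 (hr.trans_lt (hy 0 2 (by decide)).1)
  have lens : ∀ k, k ≠ 0 → k ≠ 2 → InLens (1 - ε) (dist (y 0) (y 2))
      (abscissa (y 0) (y 2) (y k)) (ordinate (y 0) (y 2) (y k)) := fun k h₀ h₂ =>
    inLens_abscissa_ordinate hpq hr (hy k 0 h₀).1 (hmax k 0) (hy k 2 h₂).1 (hmax k 2)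
  have h₁ := lens 1 (by decide) (by decide)
  have h₃ := lens 3 (by decide) (by decide)
  have e₁₀ := dist_left_sq hpq (y 1)
  have e₁₂ := dist_right_sq hpq (y 1)
  have e₃₀ := dist_left_sq hpq (y 3)
  have e₃₂ := dist_right_sq hpq (y 3)
  have e₁₃ := dist_sq_eq_abscissa_ordinate hpq (y 1) (y 3)
  have l₁₃ := hlo 1 3 (by decide)
  have u₁₃ := hhi 1 3
  set D := dist (y 0) (y 2)
  have hD : 0 ≤ D := dist_nonneg
  have hDs : D ≤ √2 + ε := (hy 0 2 (by decide)).2.le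
  have hDsq : D ^ 2 ≤ 2 + 4 * ε :=
    (pow_le_pow_left₀ hD hDs 2).trans (sq_sqrt_two_add_le hε.le hε')
  obtain ⟨hsum, h₁₃⟩ := h₁.opposite_estimates hε hε' hD hDs h₃ (e₁₃ ▸ l₁₃) (e₁₃ ▸ u₁₃)
  obtain ⟨s₁₀, s₁₂⟩ := h₁.sides_le hε hε' hD hDs h₃ hsum
  obtain ⟨s₃₀, s₃₂⟩ := h₃.sides_le hε hε' hD hDs h₁ (by rwa [add_comm])
  have side : ∀ j k, j ≠ k → dist (y j) (y k) ^ 2 ≤ 1 + 25 * ε →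
      |dist (y j) (y k) ^ 2 - 1| ≤ 25 * ε := fun j k hjk h =>
    abs_le.2 ⟨by linarith [hlo j k hjk], by linarith⟩
  have diag : ∀ j k, 2 - 12 * ε ≤ dist (y j) (y k) ^ 2 →
      |dist (y j) (y k) ^ 2 - 2| ≤ 25 * ε := fun j k h =>
    abs_le.2 ⟨by linarith, by linarith [hhi j k]⟩
  fin_cases i
  · exact ⟨side 0 1 (by decide) (by rw [dist_comm, e₁₀]; linarith), diag 0 2 (by linarith)⟩
  · exact ⟨side 1 2 (by decide) (by rw [e₁₂]; linarith), diag 1 3 (by linarith)⟩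
  · exact ⟨side 2 3 (by decide) (by rw [dist_comm, e₃₂]; linarith),
      diag 2 0 (by rw [dist_comm]; linarith)⟩
  · exact ⟨side 3 0 (by decide) (by rw [e₃₀]; linarith), diag 3 1 (by rw [dist_comm]; linarith)⟩

theorem exists_perm_fin_four_apply_zero_apply_two :
    ∀ i j : Fin 4, i ≠ j → ∃ σ : Equiv.Perm (Fin 4), σ 0 = i ∧ σ 2 = j := by
  decide

theorem exists_perm_dist_le_dist_zero_two {X : Type*} [PseudoMetricSpace X] (x : Fin 4 → X) :
    ∃ σ : Equiv.Perm (Fin 4), ∀ i j, dist (x (σ i)) (x (σ j)) ≤ dist (x (σ 0)) (x (σ 2)) := by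
  obtain ⟨⟨i, j⟩, hmax⟩ := Finite.exists_max fun ij : Fin 4 × Fin 4 => dist (x ij.1) (x ij.2)
  by_cases hij : i = j
  · refine ⟨1, fun a b => ?_⟩
    have := hmax (a, b)
    simp only [hij, dist_self] at this
    exact this.trans dist_nonneg
  · obtain ⟨σ, hσ₀, hσ₂⟩ := exists_perm_fin_four_apply_zero_apply_two i j hij
    exact ⟨σ, fun a b => hσ₀ ▸ hσ₂ ▸ hmax (σ a, σ b)⟩

/-- Four points in the plane with all six pairwise distances in (1−ε, √2+ε) form, for ε
sufficiently small and up to relabeling, an ε-square: sides of length 1 + O(ε), interior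
angles 90° + O(ε), and diagonals of length √2 + O(ε). -/
theorem eps_square_rigidity :
    ∃ C : ℝ, 0 < C ∧ ∃ ε₀ : ℝ, 0 < ε₀ ∧ ∀ ε : ℝ, 0 < ε → ε < ε₀ →
      ∀ x : Fin 4 → EuclideanSpace ℝ (Fin 2),
        (∀ i j : Fin 4, i ≠ j → dist (x i) (x j) ∈ Set.Ioo (1 - ε) (Real.sqrt 2 + ε)) →
        ∃ σ : Equiv.Perm (Fin 4), ∀ i : Fin 4,
          |dist (x (σ i)) (x (σ (i + 1))) - 1| ≤ C * ε ∧
          |EuclideanGeometry.angle (x (σ i)) (x (σ (i + 1))) (x (σ (i + 2))) - π / 2| ≤ C * ε ∧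
          |dist (x (σ i)) (x (σ (i + 2))) - Real.sqrt 2| ≤ C * ε := by
  refine ⟨100, by norm_num, 1 / 100, by norm_num, fun ε hε hε' x hx => ?_⟩
  obtain ⟨σ, hmax⟩ := exists_perm_dist_le_dist_zero_two x
  have hsq := sq_dist_estimates_of_diameter hε hε'.le (y := x ∘ σ)
    (fun i j hij => hx _ _ (σ.injective.ne hij)) hmax
  simp only [Function.comp_apply] at hsq
  refine ⟨σ, fun i => ?_⟩
  obtain ⟨hside, hdiag⟩ := hsq i
  have hside' := (hsq (i + 1)).1
  rw [add_assoc, show (1 : Fin 4) + 1 = 2 from rfl] at hside'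
  have hδ : 25 * ε ≤ 1 / 4 := by linarith
  refine ⟨?_, ?_, ?_⟩
  · exact (abs_sub_le_of_abs_sq_sub_le (δ := 25 * ε) dist_nonneg le_rfl
      (by rwa [one_pow])).trans (by linarith)
  · linarith [abs_angle_sub_pi_div_two_le hδ hside hside' hdiag]
  · exact (abs_sub_le_of_abs_sq_sub_le (δ := 25 * ε) dist_nonneg one_lt_sqrt_two.le
      (by rwa [sq_sqrt zero_le_two])).trans (by linarith)
end

section
/- There is a partition of the nonzero vectors of ℤ² as a disjoint union: {a ∈ ℤ² \ {0}} = ⊔_{r ∈ D̃} ⊔_{Λ ∈ ℒ_r} {x ∈ Λ : |x| ∈ {r, √2·r}}, where D̃ ⊂ 𝒟 is a subset of realized distances containing 1, with every other element of D̃ at least 2, and ℒ_r is the set of sublattices of ℤ² similar to rℤ². Moreover 𝒟 is the disjoint union of D̃ and √2·D̃. -/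
/-- The sublattice of ℤ² generated by v and its 90°-rotation: a scaled-rotated copy of ℤ². -/
def latticeOf (v : ℤ × ℤ) : Set (ℤ × ℤ) :=
  {x | ∃ a b : ℤ, x = (a * v.1 - b * v.2, a * v.2 + b * v.1)}

/-- The Euclidean norm of a vector of ℤ². -/
noncomputable def znorm (a : ℤ × ℤ) : ℝ := Real.sqrt ((a.1 : ℝ) ^ 2 + (a.2 : ℝ) ^ 2)

/-- The set 𝒟 of nonzero distances realized in ℤ². -/
def distSet : Set ℝ := {r | ∃ p : ℤ × ℤ, p ≠ 0 ∧ znorm p = r}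

/-- The family ℒ_r of sublattices of ℤ² similar to r·ℤ². -/
def sublattices (r : ℝ) : Set (Set (ℤ × ℤ)) :=
  {Λ | ∃ v : ℤ × ℤ, znorm v = r ∧ Λ = latticeOf v}

/- ### Auxiliary material -/

/-- Gaussian integer from a pair. -/
def toG (p : ℤ × ℤ) : GaussianInt := ⟨p.1, p.2⟩

/-- The squared norm, as a natural number. -/
def nz (p : ℤ × ℤ) : ℕ := (p.1 ^ 2 + p.2 ^ 2).natAbs

lemma nz_cast (p : ℤ × ℤ) : (nz p : ℤ) = p.1 ^ 2 + p.2 ^ 2 :=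
  Int.natAbs_of_nonneg (by positivity)

lemma norm_toG (p : ℤ × ℤ) : (toG p).norm = (nz p : ℤ) := by
  rw [nz_cast]; simp [Zsqrtd.norm, toG]; ring

lemma mem_latticeOf {v x : ℤ × ℤ} : x ∈ latticeOf v ↔ toG v ∣ toG x := by
  constructor
  · rintro ⟨a, b, rfl⟩
    exact ⟨⟨a, b⟩, by simp [toG, Zsqrtd.ext_iff, Zsqrtd.re_mul, Zsqrtd.im_mul]; constructor <;> ring⟩
  · rintro ⟨w, hw⟩
    refine ⟨w.re, w.im, ?_⟩
    rw [Zsqrtd.ext_iff] at hw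
    simp [toG, Zsqrtd.re_mul, Zsqrtd.im_mul] at hw
    rw [Prod.ext_iff]
    obtain ⟨h1, h2⟩ := hw
    constructor <;> simp <;> linarith

lemma nz_eq_zero_iff {p : ℤ × ℤ} : nz p = 0 ↔ p = 0 := by
  rw [nz]
  constructor
  · intro h
    have h' : p.1 ^ 2 + p.2 ^ 2 = 0 := Int.natAbs_eq_zero.mp h
    have h1 : p.1 = 0 := by nlinarith [sq_nonneg p.1, sq_nonneg p.2]
    have h2 : p.2 = 0 := by nlinarith [sq_nonneg p.1, sq_nonneg p.2]
    exact Prod.ext h1 h2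
  · rintro rfl; simp

lemma znorm_eq (p : ℤ × ℤ) : znorm p = Real.sqrt (nz p) := by
  rw [znorm]
  congr 1
  have := nz_cast p
  rw [show ((nz p : ℝ)) = ((nz p : ℤ) : ℝ) by push_cast; ring, this]
  push_cast
  ring

lemma znorm_inj {p q : ℤ × ℤ} (h : znorm p = znorm q) : nz p = nz q := by
  rw [znorm_eq, znorm_eq] at h
  exact_mod_cast (Real.sqrt_inj (by positivity) (by positivity)).mp h

lemma znorm_sqrt2 {a v : ℤ × ℤ} : znorm a = Real.sqrt 2 * znorm v ↔ nz a = 2 * nz v := by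
  rw [znorm_eq, znorm_eq, ← Real.sqrt_mul (by norm_num : (0:ℝ) ≤ 2),
    Real.sqrt_inj (by positivity) (by positivity)]
  constructor
  · intro h; exact_mod_cast h
  · intro h; exact_mod_cast h

lemma fact_two_mul {m : ℕ} (hm : m ≠ 0) :
    (2 * m).factorization 2 = m.factorization 2 + 1 := by
  rw [Nat.factorization_mul two_ne_zero hm]
  simp [Nat.Prime.factorization_self Nat.prime_two]
  omega

/-- The Gaussian integer 1 + i. -/
def gi : GaussianInt := ⟨1, 1⟩

lemma gi_ne_zero : gi ≠ 0 := by decide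

lemma norm_two_assoc {w : GaussianInt} (h : w.norm = 2) : Associated gi w := by
  obtain ⟨x, y⟩ := w
  have h' : x * x + y * y = 2 := by simpa [Zsqrtd.norm] using h
  have hx : -1 ≤ x ∧ x ≤ 1 := by constructor <;> nlinarith [mul_self_nonneg x, mul_self_nonneg y]
  have hy : -1 ≤ y ∧ y ≤ 1 := by constructor <;> nlinarith [mul_self_nonneg x, mul_self_nonneg y]
  obtain ⟨hx1, hx2⟩ := hx
  obtain ⟨hy1, hy2⟩ := hy
  interval_cases x <;> interval_cases y <;> simp_all
  · exact associated_of_dvd_dvd ⟨⟨-1, 0⟩, by decide⟩ ⟨⟨-1, 0⟩, by decide⟩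
  · exact associated_of_dvd_dvd ⟨⟨0, 1⟩, by decide⟩ ⟨⟨0, -1⟩, by decide⟩
  · exact associated_of_dvd_dvd ⟨⟨0, -1⟩, by decide⟩ ⟨⟨0, 1⟩, by decide⟩
  · exact associated_of_dvd_dvd ⟨⟨1, 0⟩, by decide⟩ ⟨⟨1, 0⟩, by decide⟩

lemma even_sum_sq {x y : ℤ} : Even (x ^ 2 + y ^ 2) ↔ Even (x + y) := by
  rw [Int.even_add, Int.even_add, Int.even_pow, Int.even_pow]
  tauto

lemma exists_half {p : ℤ × ℤ} (h : Even (p.1 + p.2)) :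
    ∃ b : ℤ × ℤ, toG p = gi * toG b := by
  obtain ⟨k, hk⟩ := h
  refine ⟨(k, k - p.1), ?_⟩
  rw [Zsqrtd.ext_iff]
  simp [toG, gi, Zsqrtd.re_mul, Zsqrtd.im_mul]
  omega

lemma assoc_lattice {v b : ℤ × ℤ} (h : Associated (toG v) (toG b)) :
    latticeOf v = latticeOf b := by
  ext x
  constructor
  · intro hx
    exact mem_latticeOf.mpr (dvd_trans h.symm.dvd (mem_latticeOf.mp hx))
  · intro hx
    exact mem_latticeOf.mpr (dvd_trans h.dvd (mem_latticeOf.mp hx))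

lemma not_three {x y : ℤ} : x ^ 2 + y ^ 2 ≠ 3 := by
  intro h
  have h4 : ((x : ZMod 4) ^ 2 + (y : ZMod 4) ^ 2 = 3) := by
    have := congrArg (fun n : ℤ => (n : ZMod 4)) h
    push_cast at this; exact this
  have hx : ∀ z : ZMod 4, z ^ 2 = 0 ∨ z ^ 2 = 1 := by decide
  rcases hx x with h1 | h1 <;> rcases hx y with h2 | h2 <;> rw [h1, h2] at h4 <;>
    revert h4 <;> decide

/-- The chosen set D̃: realized distances whose squared norm has even 2-adic valuation. -/
def Dt : Set ℝ :=
  {r | ∃ p : ℤ × ℤ, p ≠ 0 ∧ znorm p = r ∧ Even ((nz p).factorization 2)}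

/-- From an odd 2-adic valuation, produce the half vector. -/
lemma odd_case {p : ℤ × ℤ} (hp0 : p ≠ 0) (hpar : ¬ Even ((nz p).factorization 2)) :
    ∃ b : ℤ × ℤ, b ≠ 0 ∧ toG p = gi * toG b ∧ nz p = 2 * nz b ∧
      Even ((nz b).factorization 2) := by
  have hna : nz p ≠ 0 := fun h => hp0 (nz_eq_zero_iff.mp h)
  have hfpos : 1 ≤ (nz p).factorization 2 := by
    rcases Nat.eq_zero_or_pos ((nz p).factorization 2) with h | h
    · exact absurd (h ▸ Even.zero) hpar
    · exact h
  have h2dvd : 2 ∣ nz p := (Nat.Prime.dvd_iff_one_le_factorization Nat.prime_two hna).mpr hfpos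
  have heven : Even (p.1 + p.2) := by
    rw [← even_sum_sq, ← nz_cast]
    exact_mod_cast (even_iff_two_dvd.mpr h2dvd)
  obtain ⟨b, hb⟩ := exists_half heven
  have hnab : (nz p : ℤ) = 2 * (nz b : ℤ) := by
    rw [← norm_toG, hb, Zsqrtd.norm_mul, show gi.norm = 2 by decide, norm_toG]
  have hnab' : nz p = 2 * nz b := by exact_mod_cast hnab
  have hnb0 : nz b ≠ 0 := by omega
  refine ⟨b, fun h => hnb0 (h ▸ nz_eq_zero_iff.mpr rfl), hb, hnab', ?_⟩
  rw [hnab', fact_two_mul hnb0, Nat.even_add_one, not_not] at hpar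
  exact hpar

/-- There is a subset D̃ ⊆ 𝒟 with 1 ∈ D̃ and every other element ≥ 2, such that the nonzero
vectors of ℤ² are partitioned as ⊔_{r ∈ D̃} ⊔_{Λ ∈ ℒ_r} {x ∈ Λ : |x| ∈ {r, √2 r}}
(every nonzero a belongs to such a set for exactly one pair (r, Λ)), and moreover
𝒟 is the disjoint union of D̃ and √2·D̃. -/
theorem lattice_scale_partition :
    ∃ Dt : Set ℝ, Dt ⊆ distSet ∧ (1 : ℝ) ∈ Dt ∧ (∀ r ∈ Dt, r ≠ 1 → 2 ≤ r) ∧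
      (∀ a : ℤ × ℤ, a ≠ 0 →
        ∃! rl : ℝ × Set (ℤ × ℤ), rl.1 ∈ Dt ∧ rl.2 ∈ sublattices rl.1 ∧ a ∈ rl.2 ∧
          (znorm a = rl.1 ∨ znorm a = Real.sqrt 2 * rl.1)) ∧
      distSet = Dt ∪ (fun r => Real.sqrt 2 * r) '' Dt ∧
      Disjoint Dt ((fun r => Real.sqrt 2 * r) '' Dt) := by
  refine ⟨Dt, ?_, ?_, ?_, ?_, ?_, ?_⟩
  · -- Dt ⊆ distSet
    rintro r ⟨p, h0, hr, _⟩
    exact ⟨p, h0, hr⟩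
  · -- 1 ∈ Dt
    refine ⟨(1, 0), by decide, ?_, ?_⟩
    · rw [znorm_eq, show nz (1, 0) = 1 from rfl]
      simp
    · rw [show nz (1, 0) = 1 from rfl]
      simp
  · -- minimum 2
    rintro r ⟨p, hp0, rfl, hpe⟩ hne
    have hna : nz p ≠ 0 := fun h => hp0 (nz_eq_zero_iff.mp h)
    have h1 : nz p ≠ 1 := fun h => hne (by rw [znorm_eq, h]; simp)
    have h2 : nz p ≠ 2 := by
      intro h
      rw [h, Nat.Prime.factorization_self Nat.prime_two] at hpe
      simp at hpe
    have h3 : nz p ≠ 3 := by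
      intro h
      have := nz_cast p
      rw [h] at this
      exact not_three (x := p.1) (y := p.2) (by exact_mod_cast this.symm)
    have h4 : 4 ≤ nz p := by omega
    rw [znorm_eq]
    calc (2 : ℝ) = Real.sqrt 4 := by
          rw [show (4 : ℝ) = 2 ^ 2 by norm_num, Real.sqrt_sq (by norm_num)]
      _ ≤ Real.sqrt (nz p) := Real.sqrt_le_sqrt (by exact_mod_cast h4)
  · -- the partition property
    intro a ha
    have hna : nz a ≠ 0 := fun h => ha (nz_eq_zero_iff.mp h)
    by_cases hpar : Even ((nz a).factorization 2)
    · -- even case: canonical pair (znorm a, latticeOf a)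
      refine ⟨(znorm a, latticeOf a),
        ⟨⟨a, ha, rfl, hpar⟩, ⟨a, rfl, rfl⟩, ⟨1, 0, by simp⟩, Or.inl rfl⟩, ?_⟩
      rintro ⟨r, Λ⟩ ⟨⟨q, hq0, hqr, hqe⟩, ⟨v, hvr, rfl⟩, hmem, hnorm⟩
      have hnvq : nz v = nz q := znorm_inj (hvr.trans hqr.symm)
      have hnq : nz q ≠ 0 := fun h => hq0 (nz_eq_zero_iff.mp h)
      have hve : Even ((nz v).factorization 2) := by rw [hnvq]; exact hqe
      have hnv0 : nz v ≠ 0 := by omega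
      obtain ⟨w, hw⟩ := mem_latticeOf.mp hmem
      have hnorm_eq : (nz a : ℤ) = (nz v : ℤ) * w.norm := by
        rw [← norm_toG, ← norm_toG, hw, Zsqrtd.norm_mul]
      rcases hnorm with h1 | h2
      · have hav : nz a = nz v := znorm_inj (h1.trans hvr.symm)
        have hw1 : w.norm = 1 := by
          have : (nz v : ℤ) * 1 = (nz v : ℤ) * w.norm := by
            rw [mul_one, ← hnorm_eq]; exact_mod_cast hav.symm
          have hnvz : (nz v : ℤ) ≠ 0 := by exact_mod_cast hnv0
          exact (mul_left_cancel₀ hnvz this).symm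
        obtain ⟨u, hu⟩ := (Zsqrtd.norm_eq_one_iff' (by norm_num) w).mp hw1
        have hassoc : Associated (toG v) (toG a) := ⟨u, by rw [hu, ← hw]⟩
        exact Prod.ext h1.symm (assoc_lattice hassoc)
      · exfalso
        have hn2 : nz a = 2 * nz v := znorm_sqrt2.mp (by rw [hvr]; exact h2)
        rw [hn2, fact_two_mul hnv0, Nat.even_add_one] at hpar
        exact hpar hve
    · -- odd case: canonical pair (znorm b, latticeOf b) with a = (1+i)·b
      obtain ⟨b, hb0, hb, hnab, hbe⟩ := odd_case ha hpar
      refine ⟨(znorm b, latticeOf b),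
        ⟨⟨b, hb0, rfl, hbe⟩, ⟨b, rfl, rfl⟩,
          mem_latticeOf.mpr ⟨gi, by rw [hb]; ring⟩, Or.inr (znorm_sqrt2.mpr hnab)⟩, ?_⟩
      rintro ⟨r, Λ⟩ ⟨⟨q, hq0, hqr, hqe⟩, ⟨v, hvr, rfl⟩, hmem, hnorm⟩
      have hnvq : nz v = nz q := znorm_inj (hvr.trans hqr.symm)
      have hnq : nz q ≠ 0 := fun h => hq0 (nz_eq_zero_iff.mp h)
      have hve : Even ((nz v).factorization 2) := by rw [hnvq]; exact hqe
      have hnv0 : nz v ≠ 0 := by omega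
      obtain ⟨w, hw⟩ := mem_latticeOf.mp hmem
      have hnorm_eq : (nz a : ℤ) = (nz v : ℤ) * w.norm := by
        rw [← norm_toG, ← norm_toG, hw, Zsqrtd.norm_mul]
      rcases hnorm with h1 | h2
      · exfalso
        have hav : nz a = nz v := znorm_inj (h1.trans hvr.symm)
        rw [hav] at hpar
        exact hpar hve
      · have hn2 : nz a = 2 * nz v := znorm_sqrt2.mp (by rw [hvr]; exact h2)
        have hw2 : w.norm = 2 := by
          have : (nz v : ℤ) * 2 = (nz v : ℤ) * w.norm := by
            rw [← hnorm_eq]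
            have : (nz a : ℤ) = 2 * (nz v : ℤ) := by exact_mod_cast hn2
            linarith
          have hnvz : (nz v : ℤ) ≠ 0 := by exact_mod_cast hnv0
          exact (mul_left_cancel₀ hnvz this).symm
        obtain ⟨u, hu⟩ := norm_two_assoc hw2
        -- hu : gi * u = w
        have hkey : gi * toG b = gi * (toG v * u) := by
          rw [← hb, hw, ← hu]; ring
        have hvb : toG v * u = toG b := (mul_left_cancel₀ gi_ne_zero hkey).symm
        have hassoc : Associated (toG v) (toG b) := ⟨u, hvb⟩
        have hnvb : nz v = nz b := by omega
        refine Prod.ext ?_ (assoc_lattice hassoc)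
        rw [← hvr, znorm_eq, znorm_eq, hnvb]
  · -- distSet = Dt ∪ √2·Dt
    ext r
    constructor
    · rintro ⟨p, hp0, rfl⟩
      by_cases hpar : Even ((nz p).factorization 2)
      · exact Or.inl ⟨p, hp0, rfl, hpar⟩
      · obtain ⟨b, hb0, _, hnab, hbe⟩ := odd_case hp0 hpar
        exact Or.inr ⟨znorm b, ⟨b, hb0, rfl, hbe⟩, (znorm_sqrt2.mpr hnab).symm⟩
    · rintro (⟨p, hp0, hpr, _⟩ | ⟨s, ⟨q, hq0, rfl, _⟩, rfl⟩)
      · exact ⟨p, hp0, hpr⟩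
      · refine ⟨(q.1 - q.2, q.1 + q.2), ?_, ?_⟩
        · intro h
          apply hq0
          have h2 : nz (q.1 - q.2, q.1 + q.2) = 0 := nz_eq_zero_iff.mpr h
          have h3 : (nz (q.1 - q.2, q.1 + q.2) : ℤ) = 2 * (nz q : ℤ) := by
            rw [nz_cast, nz_cast]; ring
          rw [h2] at h3
          have : nz q = 0 := by omega
          exact nz_eq_zero_iff.mp this
        · apply znorm_sqrt2.mpr
          have h3 : (nz (q.1 - q.2, q.1 + q.2) : ℤ) = 2 * (nz q : ℤ) := by
            rw [nz_cast, nz_cast]; ring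
          exact_mod_cast h3
  · -- disjointness
    rw [Set.disjoint_left]
    rintro r ⟨p, hp0, rfl, hpe⟩ ⟨s, ⟨q, hq0, rfl, hqe⟩, hs⟩
    have hnq : nz q ≠ 0 := fun h => hq0 (nz_eq_zero_iff.mp h)
    have : nz p = 2 * nz q := znorm_sqrt2.mp hs.symm
    rw [this, fact_two_mul hnq, Nat.even_add_one] at hpe
    exact hpe hqe
end

section
/- Let x₁,x₂,x₃ ∈ ℝ² with all pairwise distances in (1−ε, √2+ε) and |x₁−x₂| = 1 + O(ε). Then for ε small enough, the angles ∠x₁x₂x₃ and ∠x₃x₁x₂ are both at least 45° − O(ε). -/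
/-!
Let the angle `θ` lie between sides `a = 1 + O(ε)` and `c < √2 + ε`, opposite a side
`b > 1 - ε`. By the law of cosines `2ac (cos θ - √2/2) = c (c - √2 a) + (a² - b²)`, and both
summands are `O(ε)`. Since `cos` has nonzero derivative at `π/4`, `cos θ ≤ √2/2 + O(ε)`
gives `θ ≥ π/4 - O(ε)`.
-/

open Real EuclideanGeometry

lemma one_add_half_le_cos_add_sin {t : ℝ} (ht₀ : 0 ≤ t) (ht : t ≤ 1 / 2) :
    1 + t / 2 ≤ cos t + sin t := by
  have hcos : 1 - t ^ 2 / 2 ≤ cos t := one_sub_sq_div_two_le_cos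
  rcases ht₀.eq_or_lt with rfl | ht₀
  · simp
  have hsin : t - t ^ 3 / 6 < sin t := sin_gt_sub_cube ht₀
  nlinarith [pow_pos ht₀ 3]

lemma sqrt_two_div_two_add_div_four_le_cos_pi_div_four_sub {t : ℝ} (ht₀ : 0 ≤ t)
    (ht : t ≤ 1 / 2) : √2 / 2 + t / 4 ≤ cos (π / 4 - t) := by
  have hsum := one_add_half_le_cos_add_sin ht₀ ht
  have hsqrt : 1 ≤ √2 := one_le_sqrt.mpr one_le_two
  rw [cos_sub, cos_pi_div_four, sin_pi_div_four, ← mul_add]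
  nlinarith

lemma pi_div_four_sub_le_of_cos_le {θ t : ℝ} (hθ₀ : 0 ≤ θ) (ht₀ : 0 ≤ t)
    (ht : t ≤ 1 / 2) (hcos : cos θ ≤ √2 / 2 + t / 4) : π / 4 - t ≤ θ := by
  by_contra! hlt
  have := cos_lt_cos_of_nonneg_of_le_pi hθ₀ (by linarith [pi_pos]) hlt
  linarith [sqrt_two_div_two_add_div_four_le_cos_pi_div_four_sub ht₀ ht]

lemma sq_add_sq_sub_sq_le {a b c δ ε : ℝ} (ha : |a - 1| ≤ δ) (hb : 1 - ε < b) (hc₀ : 0 ≤ c)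
    (hc : c < √2 + ε) (hδ : δ ≤ 1) (hε₀ : 0 ≤ ε) (hε : ε ≤ 1 / 2) :
    a ^ 2 + c ^ 2 - b ^ 2 ≤ √2 * a * c + 6 * (δ + ε) := by
  obtain ⟨ha₁, ha₂⟩ := abs_le.mp ha
  have hδ₀ : 0 ≤ δ := (abs_nonneg _).trans ha
  have hsqrt : √2 ≤ 3 / 2 := by rw [sqrt_le_left (by norm_num)]; norm_num
  have hsqrt₀ : 0 ≤ √2 := sqrt_nonneg 2
  have ha_sq : a ^ 2 ≤ 1 + 3 * δ := by nlinarith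
  have hb_sq : 1 - 2 * ε ≤ b ^ 2 := by nlinarith
  have hgap : c - √2 * a ≤ ε + √2 * δ := by nlinarith
  have hc_mul : c * (c - √2 * a) ≤ 2 * ε + 3 * δ :=
    calc c * (c - √2 * a) ≤ c * (ε + √2 * δ) := mul_le_mul_of_nonneg_left hgap hc₀
      _ ≤ (√2 + ε) * (ε + √2 * δ) := mul_le_mul_of_nonneg_right hc.le (by positivity)
      _ ≤ 2 * ε + 3 * δ := by
        nlinarith [sq_sqrt zero_le_two, mul_le_mul_of_nonneg_right hsqrt hε₀,
          mul_le_mul_of_nonneg_right hsqrt (mul_nonneg hε₀ hδ₀)]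
  nlinarith

section

variable {V P : Type*} [NormedAddCommGroup V] [InnerProductSpace ℝ V] [MetricSpace P]
  [NormedAddTorsor V P]

lemma pi_div_four_sub_le_angle {p₁ p₂ p₃ : P} {δ ε : ℝ} (h₁₂ : |dist p₁ p₂ - 1| ≤ δ)
    (h₁₃ : 1 - ε < dist p₁ p₃) (h₃₂ : 1 - ε < dist p₃ p₂) (h₃₂' : dist p₃ p₂ < √2 + ε)
    (hε₀ : 0 ≤ ε) (hsmall : δ + ε ≤ 1 / 48) :
    π / 4 - 24 * (δ + ε) ≤ ∠ p₁ p₂ p₃ := by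
  set a := dist p₁ p₂
  set c := dist p₃ p₂
  have hδ₀ : 0 ≤ δ := (abs_nonneg _).trans h₁₂
  have ha : 1 - δ ≤ a := by linarith [(abs_le.mp h₁₂).1]
  have hac : 1 / 2 ≤ a * c := by nlinarith
  have hnum := sq_add_sq_sub_sq_le h₁₂ h₁₃ dist_nonneg h₃₂' (by linarith) hε₀ (by linarith)
  have hlaw := law_cos p₁ p₂ p₃
  have hcos : cos (∠ p₁ p₂ p₃) ≤ √2 / 2 + 24 * (δ + ε) / 4 := by
    have hmul : 2 * (a * c) * (cos (∠ p₁ p₂ p₃) - √2 / 2) ≤ 6 * (δ + ε) := by nlinarith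
    nlinarith
  exact pi_div_four_sub_le_of_cos_le (angle_nonneg _ _ _) (by positivity)
    (by linarith) hcos

end

/-- If all pairwise distances of x₁, x₂, x₃ ∈ ℝ² lie in (1−ε, √2+ε) and
|x₁−x₂| = 1 + O(ε), then for ε small enough the angles ∠x₁x₂x₃ and ∠x₃x₁x₂ are both
at least 45° − O(ε). -/
theorem base_angles_ge_fortyfive :
    ∀ C' : ℝ, 0 < C' → ∃ C : ℝ, 0 < C ∧ ∃ ε₀ : ℝ, 0 < ε₀ ∧ ∀ ε : ℝ, 0 < ε → ε < ε₀ →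
      ∀ x₁ x₂ x₃ : EuclideanSpace ℝ (Fin 2),
        dist x₁ x₂ ∈ Set.Ioo (1 - ε) (Real.sqrt 2 + ε) →
        dist x₁ x₃ ∈ Set.Ioo (1 - ε) (Real.sqrt 2 + ε) →
        dist x₂ x₃ ∈ Set.Ioo (1 - ε) (Real.sqrt 2 + ε) →
        |dist x₁ x₂ - 1| ≤ C' * ε →
        π / 4 - C * ε ≤ EuclideanGeometry.angle x₁ x₂ x₃ ∧
          π / 4 - C * ε ≤ EuclideanGeometry.angle x₃ x₁ x₂ := by
  intro C' hC'
  refine ⟨24 * (C' + 1), by positivity, 1 / (48 * (C' + 1)), by positivity, ?_⟩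
  intro ε hε hε₀ x₁ x₂ x₃ _ ⟨h₁₃, h₁₃'⟩ ⟨h₂₃, h₂₃'⟩ h₁₂
  have hsmall : C' * ε + ε ≤ 1 / 48 := by
    rw [lt_div_iff₀ (by positivity)] at hε₀
    linarith
  have hC : 24 * (C' * ε + ε) = 24 * (C' + 1) * ε := by ring
  rw [dist_comm] at h₂₃ h₂₃' h₁₃ h₁₃'
  constructor
  · simpa only [hC] using pi_div_four_sub_le_angle h₁₂ (by rwa [dist_comm]) h₂₃ h₂₃' hε.le hsmall
  · rw [dist_comm] at h₁₂
    simpa only [hC, angle_comm x₃] using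
      pi_div_four_sub_le_angle h₁₂ (by rwa [dist_comm]) h₁₃ h₁₃' hε.le hsmall
end
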